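/- arXiv:2406.10002 — 4 statements merged into one kernel-verified Lean document; each statement's English description precedes it below -/
import Mathlib

section
/- Let σ be a 0-1 squashing function, K ⊆ ℝⁿ compact, B ⊆ K closed, and x₀ ∈ K \ B. Then for each ε > 0 there exists g ∈ N₂ (a one-hidden-layer network, i.e., a function of the form a₀ + Σⱼ aⱼ σ(fⱼ) with each fⱼ affine) such that g > 1 - ε on B and g(x₀) < ε. -/
open Filter Topology

/-- A 0-1 squashing function: increasing, continuous, with limit 0 at -∞ and 1 at +∞. -/
def IsSquashing (σ : ℝ → ℝ) : Prop :=
  Monotone σ ∧ Continuous σ ∧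
    Tendsto σ atBot (nhds 0) ∧ Tendsto σ atTop (nhds 1)

/-- `Net σ n k f` means `f ∈ 𝒩_k`: `𝒩₁` is the affine functions on `ℝⁿ`, and
`𝒩_{k+1}` consists of affine combinations `a₀ + Σⱼ aⱼ σ(Fⱼ)` with `Fⱼ ∈ 𝒩_k`
(so the summands `σ ∘ Fⱼ` range over `𝒩_k^σ`). -/
inductive Net (σ : ℝ → ℝ) (n : ℕ) : ℕ → ((Fin n → ℝ) → ℝ) → Prop
  | affine (a₀ : ℝ) (a : Fin n → ℝ) : Net σ n 1 (fun x => a₀ + ∑ i, a i * x i)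
  | comb (k m : ℕ) (F : Fin m → ((Fin n → ℝ) → ℝ)) (a₀ : ℝ) (a : Fin m → ℝ)
      (hF : ∀ j, Net σ n k (F j)) :
      Net σ n (k + 1) (fun x => a₀ + ∑ j, a j * σ (F j x))

theorem stmt6 (σ : ℝ → ℝ) (hσ : IsSquashing σ)
    (n : ℕ) (K : Set (Fin n → ℝ)) (hK : IsCompact K)
    (B : Set (Fin n → ℝ)) (hBK : B ⊆ K) (hB : IsClosed B)
    (x₀ : Fin n → ℝ) (hx₀ : x₀ ∈ K \ B) (ε : ℝ) (hε : 0 < ε) :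
    ∃ g : (Fin n → ℝ) → ℝ, Net σ n 2 g ∧
      (∀ x ∈ B, g x > 1 - ε) ∧ g x₀ < ε := by
  obtain ⟨hmono, hcont, hbot, htop⟩ := hσ
  obtain ⟨hx₀K, hx₀B⟩ := hx₀
  have hσ0 : ∀ t, 0 ≤ σ t := fun t =>
    le_of_tendsto hbot (eventually_atBot.2 ⟨t, fun s hs => hmono hs⟩)
  rcases B.eq_empty_or_nonempty with hBe | hBne
  · refine ⟨_, Net.comb 1 0 Fin.elim0 0 Fin.elim0 (fun j => j.elim0), ?_, ?_⟩
    · simp [hBe]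
    · simpa using hε
  -- main case
  set q : (Fin n → ℝ) → ℝ := fun b => ∑ i, (b i - x₀ i) ^ 2 with hq
  set L : (Fin n → ℝ) → (Fin n → ℝ) → ℝ :=
    fun b x => ∑ i, (b i - x₀ i) * (x i - (x₀ i + b i) / 2) with hL
  have hLb : ∀ b, L b b = q b / 2 := by
    intro b
    simp only [hL, hq, Finset.sum_div]
    exact Finset.sum_congr rfl fun i _ => by ring
  have hLx₀ : ∀ b, L b x₀ = -(q b / 2) := by
    intro b
    simp only [hL, hq, Finset.sum_div, ← Finset.sum_neg_distrib]
    exact Finset.sum_congr rfl fun i _ => by ring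
  have hqpos : ∀ b ∈ B, 0 < q b := by
    intro b hb
    have hne : b ≠ x₀ := fun h => hx₀B (h ▸ hb)
    obtain ⟨i, hi⟩ : ∃ i, b i ≠ x₀ i := by
      by_contra h; push_neg at h; exact hne (funext h)
    have hi' : b i - x₀ i ≠ 0 := sub_ne_zero.mpr hi
    exact Finset.sum_pos' (fun i _ => sq_nonneg _)
      ⟨i, Finset.mem_univ i, by positivity⟩
  -- cover
  have hBc : IsCompact B := hK.of_isClosed_subset hB hBK
  have hUopen : ∀ b : B, IsOpen {x | q (b : Fin n → ℝ) / 4 < L (b : Fin n → ℝ) x} := by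
    intro b
    apply isOpen_lt continuous_const
    exact continuous_finset_sum _ fun i _ => by fun_prop
  have hcover : B ⊆ ⋃ b : B, {x | q (b : Fin n → ℝ) / 4 < L (b : Fin n → ℝ) x} := by
    intro x hx
    refine Set.mem_iUnion.2 ⟨⟨x, hx⟩, ?_⟩
    have := hqpos x hx
    simp only [Set.mem_setOf_eq, hLb]
    linarith
  obtain ⟨t, ht⟩ := hBc.elim_finite_subcover _ hUopen hcover
  obtain ⟨b₀, hb₀⟩ := hBne
  obtain ⟨y₀, hy₀⟩ : ∃ y : B, y ∈ t := by
    have := ht hb₀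
    simp only [Set.mem_iUnion] at this
    obtain ⟨y, hy, -⟩ := this
    exact ⟨y, hy⟩
  set m := t.card with hm
  have hmpos : 0 < m := Finset.card_pos.2 ⟨y₀, hy₀⟩
  haveI : Nonempty (Fin m) := ⟨⟨0, hmpos⟩⟩
  set ev : Fin m → (Fin n → ℝ) := fun j => ((t.equivFin.symm j : {x : B // x ∈ t}) : B) with hev
  have hevB : ∀ j, ev j ∈ B := fun j => ((t.equivFin.symm j : {x : B // x ∈ t}) : B).2
  set δ : ℝ := Finset.univ.inf' Finset.univ_nonempty (fun j => q (ev j) / 4) with hδ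
  have hδpos : 0 < δ := by
    rw [hδ, Finset.lt_inf'_iff]
    intro j _
    have := hqpos _ (hevB j)
    linarith
  have hδle : ∀ j, δ ≤ q (ev j) / 4 := fun j => Finset.inf'_le _ (Finset.mem_univ j)
  -- thresholds
  set ε' : ℝ := ε / (m + 1) with hε'
  have hε'pos : 0 < ε' := by positivity
  obtain ⟨T, hT⟩ : ∃ T, ∀ s ≥ T, 1 - ε < σ s := by
    have : ∀ᶠ s in atTop, σ s ∈ Set.Ioi (1 - ε) :=
      htop.eventually_mem (Ioi_mem_nhds (by linarith))
    obtain ⟨T, hT⟩ := eventually_atTop.1 this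
    exact ⟨T, fun s hs => hT s hs⟩
  obtain ⟨S, hS⟩ : ∃ S, ∀ s ≤ S, σ s < ε' := by
    have : ∀ᶠ s in atBot, σ s ∈ Set.Iio ε' :=
      hbot.eventually_mem (Iio_mem_nhds hε'pos)
    obtain ⟨S, hS⟩ := eventually_atBot.1 this
    exact ⟨S, fun s hs => hS s hs⟩
  set M : ℝ := max (max (T / δ) (-S / δ)) 0 with hM
  have hM0 : 0 ≤ M := le_max_right _ _
  have hMT : T ≤ M * δ := by
    have h1 : T / δ ≤ M := le_trans (le_max_left _ _) (le_max_left _ _)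
    calc T = T / δ * δ := by field_simp
    _ ≤ M * δ := by nlinarith
  have hMS : -(M * δ) ≤ S := by
    have h1 : -S / δ ≤ M := le_trans (le_max_right _ _) (le_max_left _ _)
    have : -S ≤ M * δ := by
      calc -S = -S / δ * δ := by field_simp
      _ ≤ M * δ := by nlinarith
    linarith
  -- the network
  set A : Fin m → ℝ := fun j => M * ∑ i, (ev j i - x₀ i) * (-((x₀ i + ev j i) / 2)) with hA
  set c : Fin m → Fin n → ℝ := fun j i => M * (ev j i - x₀ i) with hc
  have key : ∀ j x, A j + ∑ i, c j i * x i = M * L (ev j) x := by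
    intro j x
    simp only [hA, hc, hL, Finset.mul_sum, ← Finset.sum_add_distrib]
    exact Finset.sum_congr rfl fun i _ => by ring
  refine ⟨fun x => 0 + ∑ j, (1 : ℝ) * σ (A j + ∑ i, c j i * x i),
    Net.comb 1 m (fun j => fun x => A j + ∑ i, c j i * x i) 0 (fun _ => 1)
      (fun j => Net.affine (A j) (c j)), ?_, ?_⟩
  · intro x hx
    have hxU := ht hx
    simp only [Set.mem_iUnion] at hxU
    obtain ⟨y, hyt, hyU⟩ := hxU
    set j : Fin m := t.equivFin ⟨y, hyt⟩ with hj
    have hevj : ev j = (y : Fin n → ℝ) := by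
      simp only [hev, hj, Equiv.symm_apply_apply]
    have hLy : q (ev j) / 4 < L (ev j) x := by rw [hevj]; exact hyU
    have hterm : 1 - ε < σ (A j + ∑ i, c j i * x i) := by
      apply hT
      rw [key]
      calc T ≤ M * δ := hMT
      _ ≤ M * L (ev j) x := by
          apply mul_le_mul_of_nonneg_left _ hM0
          have := hδle j
          linarith
    have hsum : σ (A j + ∑ i, c j i * x i) ≤ ∑ j', (1 : ℝ) * σ (A j' + ∑ i, c j' i * x i) := by
      simp only [one_mul]
      exact Finset.single_le_sum (f := fun j' => σ (A j' + ∑ i, c j' i * x i))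
        (fun j' _ => hσ0 _) (Finset.mem_univ j)
    simp only [zero_add]
    linarith
  · simp only [zero_add, one_mul]
    have hterm : ∀ j : Fin m, σ (A j + ∑ i, c j i * x₀ i) < ε' := by
      intro j
      apply hS
      rw [key, hLx₀]
      have h1 : δ ≤ q (ev j) / 2 := by have := hδle j; have := hqpos _ (hevB j); linarith
      have : M * δ ≤ M * (q (ev j) / 2) := mul_le_mul_of_nonneg_left h1 hM0
      have : M * -(q (ev j) / 2) ≤ -(M * δ) := by linarith [this]
      linarith [hMS]
    calc ∑ j : Fin m, σ (A j + ∑ i, c j i * x₀ i)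
        < ∑ _j : Fin m, ε' := Finset.sum_lt_sum_of_nonempty Finset.univ_nonempty
          (fun j _ => hterm j)
    _ = m * ε' := by
        rw [Finset.sum_const, Finset.card_univ, Fintype.card_fin, nsmul_eq_mul]
    _ < ε := by
        have hm1 : (0 : ℝ) < (m : ℝ) + 1 := Nat.cast_add_one_pos m
        rw [hε', mul_div_assoc', div_lt_iff₀ hm1]
        nlinarith
end

section
/- Let σ be a 0-1 squashing function, K ⊆ ℝⁿ compact, and A, B disjoint closed subsets of K. For each ε > 0 there exists h ∈ N₃ (a two-hidden-layer network) such that h < ε on B and h > 1 - ε on A. -/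
open Filter Topology

lemma net_const (σ : ℝ → ℝ) (n k : ℕ) (c : ℝ) : Net σ n (k+1) (fun _ => c) := by
  have h := Net.comb (σ := σ) (n := n) k 0 Fin.elim0 c Fin.elim0 (fun j => j.elim0)
  simpa using h

lemma net_smul_sigma (σ : ℝ → ℝ) (n k : ℕ) (c : ℝ) {g} (hg : Net σ n k g) :
    Net σ n (k+1) (fun x => c * σ (g x)) := by
  have h := Net.comb (σ := σ) (n := n) k 1 (fun _ => g) 0 (fun _ => c) (fun _ => hg)
  simpa using h

lemma net_add (σ : ℝ → ℝ) (n : ℕ) {k : ℕ} {f g} (hf : Net σ n (k+2) f)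
    (hg : Net σ n (k+2) g) : Net σ n (k+2) (fun x => f x + g x) := by
  cases hf with
  | comb _ m₁ F a₀ a hF =>
    cases hg with
    | comb _ m₂ G b₀ b hG =>
      have h := Net.comb (σ := σ) (n := n) (k+1) (m₁+m₂) (Fin.append F G) (a₀+b₀)
        (Fin.append a b) ?_
      · convert h using 1
        funext x
        rw [Fin.sum_univ_add]
        simp only [Fin.append_left, Fin.append_right]
        ring
      · intro j
        refine Fin.addCases (fun i => ?_) (fun i => ?_) j
        · simpa [Fin.append_left] using hF i
        · simpa [Fin.append_right] using hG i

lemma net_sum (σ : ℝ → ℝ) (n : ℕ) {k : ℕ} {ι : Type*} (s : Finset ι)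
    (f : ι → (Fin n → ℝ) → ℝ) (hf : ∀ i ∈ s, Net σ n (k+2) (f i)) :
    Net σ n (k+2) (fun x => ∑ i ∈ s, f i x) := by
  classical
  induction s using Finset.induction_on with
  | empty => simpa using net_const σ n (k+1) 0
  | @insert a s ha ih =>
    simp only [Finset.sum_insert ha]
    exact net_add σ n (hf a (Finset.mem_insert_self a s))
      (ih fun i hi => hf i (Finset.mem_insert_of_mem hi))

lemma net_affine_coord (σ : ℝ → ℝ) (n : ℕ) (i : Fin n) (α β : ℝ) :
    Net σ n 1 (fun x => α * x i + β) := by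
  have h := Net.affine (σ := σ) (n := n) β (fun j => if j = i then α else 0)
  have e : (fun x : Fin n → ℝ => α * x i + β)
      = fun x => β + ∑ j, (if j = i then α else 0) * x j := by
    funext x
    simp [ite_mul, Finset.sum_ite_eq']
    ring
  rw [e]; exact h

lemma squash_nonneg {σ : ℝ → ℝ} (hσ : IsSquashing σ) (t : ℝ) : 0 ≤ σ t :=
  le_of_tendsto hσ.2.2.1 ((eventually_le_atBot t).mono fun s hs => hσ.1 hs)

lemma squash_le_one {σ : ℝ → ℝ} (hσ : IsSquashing σ) (t : ℝ) : σ t ≤ 1 :=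
  ge_of_tendsto hσ.2.2.2 ((eventually_ge_atTop t).mono fun s hs => hσ.1 hs)

lemma squash_threshold {σ : ℝ → ℝ} (hσ : IsSquashing σ) {η : ℝ} (hη : 0 < η) :
    ∃ T : ℝ, 0 ≤ T ∧ (∀ t, T ≤ t → 1 - η < σ t) ∧ (∀ t, t ≤ -T → σ t < η) := by
  have h1 : ∀ᶠ t in atTop, 1 - η < σ t :=
    hσ.2.2.2.eventually (eventually_gt_nhds (by linarith))
  have h2 : ∀ᶠ t in atBot, σ t < η := hσ.2.2.1.eventually (eventually_lt_nhds hη)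
  obtain ⟨T₁, hT₁⟩ := eventually_atTop.mp h1
  obtain ⟨T₂, hT₂⟩ := eventually_atBot.mp h2
  refine ⟨max 0 (max T₁ (-T₂)), le_max_left _ _, fun t ht => hT₁ t ?_, fun t ht => hT₂ t ?_⟩
  · have := le_trans (le_max_left T₁ (-T₂)) (le_max_right 0 _); linarith
  · have := le_trans (le_max_right T₁ (-T₂)) (le_max_right 0 _); linarith

lemma exists_coord {n : ℕ} (x c : Fin n → ℝ) {δ : ℝ} (hδ : 0 < δ) (h : δ ≤ dist x c) :
    ∃ i, δ ≤ |x i - c i| := by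
  rcases Nat.eq_zero_or_pos n with h0 | hpos
  · exfalso
    subst h0
    have hxc : x = c := funext fun i => i.elim0
    rw [hxc, dist_self] at h
    linarith
  · haveI : Nonempty (Fin n) := Fin.pos_iff_nonempty.mp hpos
    obtain ⟨i, -, hi⟩ := Finset.exists_mem_eq_sup Finset.univ Finset.univ_nonempty
      (fun i => nndist (x i) (c i))
    refine ⟨i, ?_⟩
    have e : dist x c = dist (x i) (c i) := by
      rw [dist_pi_def, hi]; rfl
    rw [e, Real.dist_eq] at h
    exact h

set_option maxHeartbeats 1000000 in
theorem stmt8 (σ : ℝ → ℝ) (hσ : IsSquashing σ)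
    (n : ℕ) (K : Set (Fin n → ℝ)) (hK : IsCompact K)
    (A B : Set (Fin n → ℝ)) (hAK : A ⊆ K) (hBK : B ⊆ K)
    (hA : IsClosed A) (hB : IsClosed B) (hAB : Disjoint A B)
    (ε : ℝ) (hε : 0 < ε) :
    ∃ h : (Fin n → ℝ) → ℝ, Net σ n 3 h ∧
      (∀ x ∈ B, h x < ε) ∧ (∀ x ∈ A, h x > 1 - ε) := by
  classical
  by_cases hAe : A = ∅
  · refine ⟨fun _ => 0, by simpa using net_const σ n 2 0, fun x _ => hε, fun x hx => ?_⟩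
    rw [hAe] at hx; exact absurd hx (Set.notMem_empty x)
  by_cases hBe : B = ∅
  · refine ⟨fun _ => 1, by simpa using net_const σ n 2 1, fun x hx => ?_,
      fun x _ => show (1:ℝ) > 1 - ε by linarith⟩
    rw [hBe] at hx; exact absurd hx (Set.notMem_empty x)
  have hAne : A.Nonempty := Set.nonempty_iff_ne_empty.mpr hAe
  have hBne : B.Nonempty := Set.nonempty_iff_ne_empty.mpr hBe
  have hAcomp : IsCompact A := hK.of_isClosed_subset hA hAK
  obtain ⟨a₀, ha₀A, hmin⟩ := hAcomp.exists_isMinOn hAne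
    (Metric.continuous_infDist_pt B).continuousOn
  obtain ⟨δ, hδdef⟩ : ∃ d : ℝ, d = Metric.infDist a₀ B := ⟨_, rfl⟩
  have ha₀B : a₀ ∉ B := fun hmem => (Set.disjoint_left.mp hAB ha₀A) hmem
  have hδpos : 0 < δ := by rw [hδdef]; exact (hB.notMem_iff_infDist_pos hBne).mp ha₀B
  have hδle : ∀ a ∈ A, ∀ b ∈ B, δ ≤ dist a b := fun a ha b hb => by
    rw [hδdef]; exact le_trans (hmin ha) (Metric.infDist_le_dist_of_mem hb)
  have hrpos : 0 < δ/4 := by linarith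
  obtain ⟨t, htA, htfin, htcov⟩ := hAcomp.elim_finite_subcover_image
    (b := A) (c := fun a => Metric.ball a (δ/4))
    (fun a _ => Metric.isOpen_ball)
    (fun x hx => Set.mem_biUnion hx (Metric.mem_ball_self hrpos))
  obtain ⟨tF, htFdef⟩ : ∃ s : Finset (Fin n → ℝ), s = htfin.toFinset := ⟨_, rfl⟩
  obtain ⟨τ, hτdef⟩ : ∃ τ : ℝ, τ = 1/(8*((n:ℝ)+1)) := ⟨_, rfl⟩
  have hτpos : 0 < τ := by rw [hτdef]; positivity
  have hτ8 : τ * (8*((n:ℝ)+1)) = 1 := by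
    rw [hτdef]; field_simp
  obtain ⟨T₀, hT₀0, hT₀hi, hT₀lo⟩ := squash_threshold hσ hτpos
  obtain ⟨M, hMdef⟩ : ∃ M : ℝ, M = (T₀+1)/(δ/4) := ⟨_, rfl⟩
  have hMγ : M * (δ/4) = T₀ + 1 := by rw [hMdef]; field_simp
  have hMpos : 0 < M := by rw [hMdef]; positivity
  obtain ⟨ε₃, hε₃def⟩ : ∃ e : ℝ, e = min ε (ε/(tF.card+1)) := ⟨_, rfl⟩
  have hε₃pos : 0 < ε₃ := by rw [hε₃def]; exact lt_min hε (by positivity)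
  obtain ⟨T₁, hT₁0, hT₁hi, hT₁lo⟩ := squash_threshold hσ hε₃pos
  obtain ⟨M', hM'def⟩ : ∃ M : ℝ, M = 4*(T₁+1) := ⟨_, rfl⟩
  have hM'pos : 0 < M' := by rw [hM'def]; linarith
  obtain ⟨g, hgdef⟩ : ∃ g : (Fin n → ℝ) → (Fin n → ℝ) → ℝ, g = fun c x =>
      (M' * (1/2 - (n:ℝ))) + ∑ i, (M' * σ (M * x i + (M * (δ/2) - M * c i))
        + (-M') * σ (M * x i + (-(M * (δ/2)) - M * c i))) := ⟨_, rfl⟩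
  have hgnet : ∀ c, Net σ n 2 (g c) := by
    intro c
    rw [hgdef]
    exact net_add σ n (net_const σ n 1 _)
      (net_sum σ n Finset.univ _ fun i _ =>
        net_add σ n (net_smul_sigma σ n 1 M' (net_affine_coord σ n i M _))
          (net_smul_sigma σ n 1 (-M') (net_affine_coord σ n i M _)))
  obtain ⟨h0, hh0def⟩ : ∃ h : (Fin n → ℝ) → ℝ, h = fun x => ∑ c ∈ tF, σ (g c x) :=
    ⟨_, rfl⟩
  have hh0net : Net σ n 3 h0 := by
    rw [hh0def]
    refine net_sum σ n tF _ fun c _ => ?_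
    have := net_smul_sigma σ n 2 1 (hgnet c)
    simpa using this
  -- key estimate on A
  have keyA : ∀ x ∈ A, ∃ c ∈ tF, T₁ + 1 ≤ g c x := by
    intro x hx
    obtain ⟨c, hct, hxc⟩ := Set.mem_iUnion₂.mp (htcov hx)
    refine ⟨c, by rw [htFdef]; exact htfin.mem_toFinset.mpr hct, ?_⟩
    have hxc' : dist x c < δ/4 := Metric.mem_ball.mp hxc
    have hterm : ∀ i : Fin n, M' * (1 - τ) + (-M') * τ ≤
        M' * σ (M * x i + (M * (δ/2) - M * c i))
          + (-M') * σ (M * x i + (-(M * (δ/2)) - M * c i)) := by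
      intro i
      have hco : |x i - c i| < δ/4 := by
        have h1 := dist_le_pi_dist x c i
        rw [Real.dist_eq] at h1
        linarith
      obtain ⟨hlo, hhi⟩ := abs_lt.mp hco
      have f1 : M * (-(δ/4)) < M * (x i - c i) :=
        mul_lt_mul_of_pos_left hlo hMpos
      have f2 : M * (x i - c i) < M * (δ/4) :=
        mul_lt_mul_of_pos_left hhi hMpos
      have harg1 : T₀ ≤ M * x i + (M * (δ/2) - M * c i) := by linarith
      have harg2 : M * x i + (-(M * (δ/2)) - M * c i) ≤ -T₀ := by linarith
      have hs1 := hT₀hi _ harg1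
      have hs2 := hT₀lo _ harg2
      have g1 : M' * (1 - τ) ≤ M' * σ (M * x i + (M * (δ/2) - M * c i)) :=
        mul_le_mul_of_nonneg_left hs1.le hM'pos.le
      have g2 : M' * σ (M * x i + (-(M * (δ/2)) - M * c i)) ≤ M' * τ :=
        mul_le_mul_of_nonneg_left hs2.le hM'pos.le
      linarith
    have hsum := Finset.sum_le_sum (fun i (_ : i ∈ Finset.univ) => hterm i)
    rw [Finset.sum_const, Finset.card_univ, Fintype.card_fin, nsmul_eq_mul] at hsum
    have h2 : 8*(n:ℝ)*τ ≤ 1 := by nlinarith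
    have h3 : M' * (8*(n:ℝ)*τ) ≤ M' * 1 := mul_le_mul_of_nonneg_left h2 hM'pos.le
    simp only [hgdef]
    nlinarith [hsum]
  -- key estimate on B
  have keyB : ∀ c ∈ tF, ∀ x ∈ B, g c x ≤ -(T₁+1) := by
    intro c hc x hx
    have hcA : c ∈ A := htA (htfin.mem_toFinset.mp (htFdef ▸ hc))
    have hdist : δ ≤ dist x c := by rw [dist_comm]; exact hδle c hcA x hx
    obtain ⟨i₀, hi₀⟩ := exists_coord x c hδpos hdist
    have hb : ∀ i : Fin n,
        M' * σ (M * x i + (M * (δ/2) - M * c i))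
          + (-M') * σ (M * x i + (-(M * (δ/2)) - M * c i))
        ≤ M' + (if i = i₀ then M'*τ - M' else 0) := by
      intro i
      by_cases hii : i = i₀
      · rw [if_pos hii]; subst hii
        rcases le_abs.mp hi₀ with hcase | hcase
        · have f : M * δ ≤ M * (x i - c i) :=
            mul_le_mul_of_nonneg_left hcase hMpos.le
          have harg2 : T₀ ≤ M * x i + (-(M * (δ/2)) - M * c i) := by linarith
          have hs2 := hT₀hi _ harg2
          have hs1 := squash_le_one hσ (M * x i + (M * (δ/2) - M * c i))
          have g1 : M' * σ (M * x i + (M * (δ/2) - M * c i)) ≤ M' * 1 :=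
            mul_le_mul_of_nonneg_left hs1 hM'pos.le
          have g2 : M' * (1 - τ) ≤ M' * σ (M * x i + (-(M * (δ/2)) - M * c i)) :=
            mul_le_mul_of_nonneg_left hs2.le hM'pos.le
          linarith
        · have f : M * (x i - c i) ≤ M * (-δ) :=
            mul_le_mul_of_nonneg_left (by linarith) hMpos.le
          have harg1 : M * x i + (M * (δ/2) - M * c i) ≤ -T₀ := by linarith
          have hs1 := hT₀lo _ harg1
          have hs2 := squash_nonneg hσ (M * x i + (-(M * (δ/2)) - M * c i))
          have g1 : M' * σ (M * x i + (M * (δ/2) - M * c i)) ≤ M' * τ :=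
            mul_le_mul_of_nonneg_left hs1.le hM'pos.le
          have g2 : 0 ≤ M' * σ (M * x i + (-(M * (δ/2)) - M * c i)) :=
            mul_nonneg hM'pos.le hs2
          linarith
      · rw [if_neg hii]
        have hs1 := squash_le_one hσ (M * x i + (M * (δ/2) - M * c i))
        have hs2 := squash_nonneg hσ (M * x i + (-(M * (δ/2)) - M * c i))
        have g1 : M' * σ (M * x i + (M * (δ/2) - M * c i)) ≤ M' * 1 :=
          mul_le_mul_of_nonneg_left hs1 hM'pos.le
        have g2 : 0 ≤ M' * σ (M * x i + (-(M * (δ/2)) - M * c i)) :=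
          mul_nonneg hM'pos.le hs2
        linarith
    have hsum := Finset.sum_le_sum (fun i (_ : i ∈ Finset.univ) => hb i)
    have hrhs : ∑ i : Fin n, (M' + (if i = i₀ then M'*τ - M' else 0))
        = (n:ℝ)*M' + (M'*τ - M') := by
      rw [Finset.sum_add_distrib, Finset.sum_const, Finset.card_univ, Fintype.card_fin,
        nsmul_eq_mul, Finset.sum_ite_eq' Finset.univ i₀, if_pos (Finset.mem_univ i₀)]
    rw [hrhs] at hsum
    have hτq : τ ≤ 1/4 := by
      nlinarith [mul_nonneg (Nat.cast_nonneg (α := ℝ) n) hτpos.le]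
    have h4 : M' * τ ≤ M' * (1/4) := mul_le_mul_of_nonneg_left hτq hM'pos.le
    simp only [hgdef]
    nlinarith [hsum]
  refine ⟨h0, hh0net, ?_, ?_⟩
  · intro x hx
    have hlt : ∀ c ∈ tF, σ (g c x) < ε/(tF.card+1) := by
      intro c hc
      have h1 : g c x ≤ -T₁ := by linarith [keyB c hc x hx]
      refine lt_of_lt_of_le (hT₁lo _ h1) ?_
      rw [hε₃def] at *
      exact min_le_right ε _
    simp only [hh0def]
    rcases Finset.eq_empty_or_nonempty tF with he | hne
    · rw [he]; simpa using hε
    · have hs := Finset.sum_lt_sum_of_nonempty hne hlt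
      rw [Finset.sum_const, nsmul_eq_mul] at hs
      have hm1 : (0:ℝ) < (tF.card:ℝ)+1 := by positivity
      have hfinal : (tF.card:ℝ) * (ε/((tF.card:ℝ)+1)) < ε := by
        rw [mul_comm, div_mul_eq_mul_div, div_lt_iff₀ hm1]
        nlinarith
      linarith
  · intro x hx
    obtain ⟨c, hc, hge⟩ := keyA x hx
    have h1 : 1 - ε₃ < σ (g c x) := hT₁hi _ (by linarith)
    have h2 : σ (g c x) ≤ ∑ c' ∈ tF, σ (g c' x) :=
      Finset.single_le_sum (fun c' _ => squash_nonneg hσ (g c' x)) hc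
    have hε₃ε : ε₃ ≤ ε := by rw [hε₃def]; exact min_le_left _ _
    simp only [hh0def]
    linarith
end

section
/- Let T : K → ℝ be continuous on a compact K ⊆ ℝⁿ, let α > 0, and let f̂ : K → ℝ satisfy ‖f̂ - T‖_∞ < 4α/3. Suppose H : K → [0,1] is a function with H < 1/6 on U⁻ = {x : -4α/3 ≤ (f̂-T)(x) ≤ -α/3} and H > 5/6 on U⁺ = {x : α/3 ≤ (f̂-T)(x) ≤ 4α/3}. Then f = f̂ - αH + α/2 satisfies ‖f - T‖_∞ < α. -/
open Filter Topology

theorem stmt11 (n : ℕ) (K : Set (Fin n → ℝ)) (hK : IsCompact K)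
    (T : (Fin n → ℝ) → ℝ) (hT : ContinuousOn T K) (α : ℝ) (hα : 0 < α)
    (fhat H : (Fin n → ℝ) → ℝ)
    (hfhat : ∀ x ∈ K, |fhat x - T x| < 4 * α / 3)
    (hH01 : ∀ x ∈ K, 0 ≤ H x ∧ H x ≤ 1)
    (hHm : ∀ x ∈ K, -(4 * α / 3) ≤ fhat x - T x ∧ fhat x - T x ≤ -(α / 3) → H x < 1 / 6)
    (hHp : ∀ x ∈ K, α / 3 ≤ fhat x - T x ∧ fhat x - T x ≤ 4 * α / 3 → H x > 5 / 6) :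
    ∀ x ∈ K, |(fhat x - α * H x + α / 2) - T x| < α := by
  intro x hx
  have hd := abs_lt.mp (hfhat x hx)
  obtain ⟨h0, h1⟩ := hH01 x hx
  rw [abs_lt]
  rcases le_or_gt (fhat x - T x) (-(α / 3)) with hc | hc
  · have := hHm x hx ⟨le_of_lt hd.1, hc⟩
    constructor <;> nlinarith
  · rcases le_or_gt (α / 3) (fhat x - T x) with hc2 | hc2
    · have := hHp x hx ⟨hc2, le_of_lt hd.2⟩
      constructor <;> nlinarith
    · constructor <;> nlinarith
end

section
/- Let σ be a 0-1 squashing function and suppose additionally σ is strictly increasing. Let K ⊆ ℝⁿ be compact. Then for every continuous function T : K → σ(ℝ) (taking values in the image of σ) and every ε > 0, there exists F ∈ N₄^σ with sup_{x∈K} |F(x) - T(x)| < ε. -/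
/-!
Since σ is a strictly increasing continuous bijection onto its range, `h := σ⁻¹ ∘ T` is continuous
on `K`, and it suffices to approximate `h` uniformly on `K` by networks of depth 4, then compose
with σ, which is uniformly continuous near the compact set `h '' K`.

A steep staircase `a₀ + Σⱼ aⱼ σ(bⱼ t + cⱼ)` approximates any continuous function on a bounded
interval, so a continuous function of a depth-`k` network is approximated on `K` at depth `k + 1`;
with the identity this raises the depth at no cost. At depth 2 this reaches the exponential ridge
functions `exp (w ⬝ x)`. Their products are again exponential ridge functions, so their span is a
point-separating subalgebra of `C(K, ℝ)`, dense by Stone–Weierstrass.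
-/

open Filter Topology

namespace Net

variable {σ : ℝ → ℝ} {n k : ℕ} {F G : (Fin n → ℝ) → ℝ}

theorem continuous (hσ : Continuous σ) (hF : Net σ n k F) : Continuous F := by
  induction hF with
  | affine a₀ a => fun_prop
  | comb k m F a₀ a hF ih =>
    exact continuous_const.add (continuous_finsetSum _ fun j _ =>
      continuous_const.mul (hσ.comp (ih j)))

theorem const (k : ℕ) (c : ℝ) : Net σ n (k + 1) fun _ => c := by
  simpa using Net.comb (σ := σ) (n := n) k 0 Fin.elim0 c Fin.elim0 fun j => j.elim0

theorem mul_add_const (hF : Net σ n k F) (β γ : ℝ) : Net σ n k fun x => β * F x + γ := by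
  cases hF with
  | affine a₀ a =>
    convert Net.affine (σ := σ) (β * a₀ + γ) (β • a) using 2 with x
    simp only [Pi.smul_apply, smul_eq_mul, mul_add, Finset.mul_sum, mul_assoc]
    ring
  | comb k m F a₀ a hF =>
    convert Net.comb k m F (β * a₀ + γ) (β • a) hF using 2 with x
    simp only [Pi.smul_apply, smul_eq_mul, mul_add, Finset.mul_sum, mul_assoc]
    ring

theorem add (hF : Net σ n (k + 2) F) (hG : Net σ n (k + 2) G) :
    Net σ n (k + 2) fun x => F x + G x := by
  cases hF with
  | comb _ m P a₀ a hP =>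
    cases hG with
    | comb _ m' Q b₀ b hQ =>
      have hPQ : ∀ j, Net σ n (k + 1) (Fin.append P Q j) :=
        Fin.addCases (fun i => by simpa using hP i) (fun i => by simpa using hQ i)
      convert Net.comb (k + 1) (m + m') (Fin.append P Q) (a₀ + b₀) (Fin.append a b) hPQ
        using 2 with x
      rw [Fin.sum_univ_add]
      simp only [Fin.append_left, Fin.append_right]
      ring

end Net

open Finset in
theorem sum_range_sub_mul_eq (f S : ℕ → ℝ) {j N : ℕ} (hj : j ≤ N) :
    f 0 + ∑ i ∈ range N, (f (i + 1) - f i) * S i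
      = f j + ∑ i ∈ range N, (f (i + 1) - f i) * (S i - if i < j then 1 else 0) := by
  have hsplit : ∑ i ∈ range N, (f (i + 1) - f i) * (if i < j then 1 else 0) = f j - f 0 := by
    rw [← sum_range_add_sum_Ico _ hj, ← sum_range_sub, sum_eq_zero (s := Ico j N)
      fun i hi => by rw [if_neg (mem_Ico.1 hi).1.not_gt, mul_zero], add_zero]
    exact sum_congr rfl fun i hi => by rw [if_pos (mem_range.1 hi), mul_one]
  simp only [mul_sub, sum_sub_distrib, hsplit]
  ring

open Finset in
theorem abs_add_sum_range_sub_mul_sub_le (f S : ℕ → ℝ) {j N : ℕ} (hj : j < N) {ε η : ℝ}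
    (hε : 0 ≤ ε) (hf : ∀ i < N, |f (i + 1) - f i| ≤ ε)
    (hS : ∀ i < N, |S i - if i < j then 1 else 0| ≤ η + if i = j then 1 else 0) :
    |f 0 + ∑ i ∈ range N, (f (i + 1) - f i) * S i - f j| ≤ ε * (N * η + 1) := by
  rw [sum_range_sub_mul_eq f S hj.le, add_sub_cancel_left]
  calc _ ≤ ∑ i ∈ range N, |f (i + 1) - f i| * |S i - if i < j then 1 else 0| := by
        simpa only [abs_mul] using abs_sum_le_sum_abs
          (fun i => (f (i + 1) - f i) * (S i - if i < j then 1 else 0)) (range N)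
    _ ≤ ∑ i ∈ range N, ε * (η + if i = j then 1 else 0) := sum_le_sum fun i hi =>
        mul_le_mul (hf i (mem_range.1 hi)) (hS i (mem_range.1 hi)) (abs_nonneg _) hε
    _ = ε * (N * η + 1) := by
        rw [← mul_sum, sum_add_distrib, sum_const, card_range, nsmul_eq_mul,
          sum_ite_eq_of_mem' _ _ _ (mem_range.2 hj)]

theorem exists_fine_grid {A B r : ℝ} (hAB : A < B) (hr : 0 < r) :
    ∃ (N : ℕ) (Δ : ℝ), 0 < Δ ∧ Δ < r ∧ A + (N + 1) * Δ = B := by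
  obtain ⟨N, hN⟩ := exists_nat_gt ((B - A) / r)
  have hN1 : (0 : ℝ) < N + 1 := by positivity
  refine ⟨N, (B - A) / (N + 1), div_pos (sub_pos.2 hAB) hN1, ?_, by field_simp; ring⟩
  rw [div_lt_iff₀ hN1]
  rw [div_lt_iff₀ hr] at hN
  linarith

theorem exists_mem_Icc_succ_of_mem_Icc {p : ℕ → ℝ} {t : ℝ} {N : ℕ}
    (ht : t ∈ Set.Icc (p 0) (p (N + 1))) : ∃ j ≤ N, t ∈ Set.Icc (p j) (p (j + 1)) := by
  induction N with
  | zero => exact ⟨0, le_rfl, ht⟩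
  | succ N ih =>
    by_cases h : t ≤ p (N + 1)
    · obtain ⟨j, hj, hjt⟩ := ih ⟨ht.1, h⟩
      exact ⟨j, hj.trans N.le_succ, hjt⟩
    · exact ⟨N + 1, le_rfl, (not_le.1 h).le, ht.2⟩

namespace IsSquashing

variable {σ : ℝ → ℝ}

theorem mem_Icc (hσ : IsSquashing σ) (s : ℝ) : σ s ∈ Set.Icc 0 1 :=
  ⟨hσ.1.le_of_tendsto hσ.2.2.1 s, hσ.1.ge_of_tendsto hσ.2.2.2 s⟩

theorem exists_steep (hσ : IsSquashing σ) {η Δ : ℝ} (hη : 0 < η) (hΔ : 0 < Δ) :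
    ∃ L, ∀ s, (Δ ≤ s → |σ (L * s) - 1| < η) ∧ (s ≤ -Δ → |σ (L * s)| < η) := by
  obtain ⟨P, hP⟩ := eventually_atTop.mp (hσ.2.2.2.eventually (Metric.ball_mem_nhds 1 hη))
  obtain ⟨Q, hQ⟩ := eventually_atBot.mp (hσ.2.2.1.eventually (Metric.ball_mem_nhds 0 hη))
  set M := max (max P (-Q)) 1
  have hM : 0 < M := lt_of_lt_of_le one_pos (le_max_right _ _)
  have hLΔ : M / Δ * Δ = M := div_mul_cancel₀ M hΔ.ne'
  refine ⟨M / Δ, fun s => ⟨fun hs => ?_, fun hs => ?_⟩⟩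
  · have : M / Δ * Δ ≤ M / Δ * s := mul_le_mul_of_nonneg_left hs (div_pos hM hΔ).le
    simpa [Real.dist_eq] using hP _ (by linarith [le_max_left P (-Q), le_max_left (max P (-Q)) 1])
  · have : M / Δ * s ≤ M / Δ * -Δ := mul_le_mul_of_nonneg_left hs (div_pos hM hΔ).le
    simpa [Real.dist_eq] using hQ _ (by linarith [le_max_right P (-Q), le_max_left (max P (-Q)) 1])

theorem abs_sub_step_le (hσ : IsSquashing σ) {L η Δ A t : ℝ} {j : ℕ} (hη : 0 ≤ η) (hΔ : 0 ≤ Δ)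
    (hL : ∀ s, (Δ / 2 ≤ s → |σ (L * s) - 1| < η) ∧ (s ≤ -(Δ / 2) → |σ (L * s)| < η))
    (ht : t ∈ Set.Icc (A + j * Δ) (A + (j + 1) * Δ)) (i : ℕ) :
    |σ (L * (t - (A + i * Δ + Δ / 2))) - if i < j then 1 else 0| ≤ η + if i = j then 1 else 0 := by
  rcases lt_trichotomy i j with hij | rfl | hij
  · have : ((i + 1 : ℕ) : ℝ) * Δ ≤ j * Δ := by gcongr; exact hij
    push_cast at this
    simpa [hij, hij.ne] using ((hL _).1 (by linarith [ht.1])).le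
  · have h01 := hσ.mem_Icc (L * (t - (A + i * Δ + Δ / 2)))
    simp only [lt_irrefl, ↓reduceIte, sub_zero]
    linarith [abs_le.2 ⟨by linarith [h01.1], h01.2⟩]
  · have : ((j + 1 : ℕ) : ℝ) * Δ ≤ i * Δ := by gcongr; exact hij
    push_cast at this
    simpa [hij.not_gt, hij.ne'] using ((hL _).2 (by linarith [ht.2])).le

open Finset Set in
theorem exists_sum_near (hσ : IsSquashing σ) {φ : ℝ → ℝ} {A B δ : ℝ}
    (hφ : ContinuousOn φ (Icc A B)) (hδ : 0 < δ) :
    ∃ (m : ℕ) (a₀ : ℝ) (a b c : Fin m → ℝ),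
      ∀ t ∈ Icc A B, |a₀ + ∑ j, a j * σ (b j * t + c j) - φ t| < δ := by
  rcases le_or_gt B A with hBA | hAB
  · refine ⟨0, φ A, Fin.elim0, Fin.elim0, Fin.elim0, fun t ht => ?_⟩
    simp [le_antisymm (ht.2.trans hBA) ht.1, hδ]
  obtain ⟨r, hr, hφr⟩ := Metric.uniformContinuousOn_iff.mp
    (isCompact_Icc.uniformContinuousOn_of_continuous hφ) (δ / 4) (by positivity)
  obtain ⟨N, Δ, hΔ, hΔr, hNΔ⟩ := exists_fine_grid hAB hr
  set p : ℕ → ℝ := fun i => A + i * Δ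
  have hp_mono : ∀ {i k : ℕ}, i ≤ k → p i ≤ p k := fun h => by simp only [p]; gcongr
  have hp_succ : ∀ i, p (i + 1) = p i + Δ := fun i => by simp only [p]; push_cast; ring
  have hp_last : p (N + 1) = B := by simpa [p] using hNΔ
  have hp_mem : ∀ i ≤ N + 1, p i ∈ Icc A B := fun i hi =>
    ⟨by simpa [p] using hp_mono (Nat.zero_le i), hp_last ▸ hp_mono hi⟩
  -- jumps of height `d i` at the midpoints `p i + Δ / 2` of the grid cells
  set d : ℕ → ℝ := fun i => φ (p (i + 1)) - φ (p i)
  have hd : ∀ i < N + 1, |d i| ≤ δ / 4 := fun i hi => by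
    have := hφr _ (hp_mem (i + 1) hi) _ (hp_mem i hi.le)
      (by rw [Real.dist_eq, hp_succ]; simpa [abs_of_pos hΔ] using hΔr)
    rw [Real.dist_eq] at this
    exact this.le
  obtain ⟨L, hLσ⟩ := hσ.exists_steep (η := 1 / (N + 1)) (by positivity) (half_pos hΔ)
  refine ⟨N + 1, φ A, fun i => d i, fun _ => L, fun i => -(L * (p i + Δ / 2)),
    fun t ht => ?_⟩
  set S : ℕ → ℝ := fun i => σ (L * (t - (p i + Δ / 2)))
  have hsum : ∑ j : Fin (N + 1), d j * σ (L * t + -(L * (p j + Δ / 2)))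
      = ∑ i ∈ range (N + 1), d i * S i := by
    rw [← Fin.sum_univ_eq_sum_range]
    simp only [S, mul_sub]
    rfl
  obtain ⟨j, hjN, hjt⟩ := exists_mem_Icc_succ_of_mem_Icc (p := p) (N := N)
    (by simpa [p, hp_last] using ht)
  have hS : ∀ i < N + 1, |S i - if i < j then 1 else 0| ≤ 1 / (N + 1) + if i = j then 1 else 0 :=
    fun i _ => hσ.abs_sub_step_le (by positivity) hΔ.le hLσ (by simpa [p] using hjt) i
  have hstair := abs_add_sum_range_sub_mul_sub_le (fun i => φ (p i)) S (Nat.lt_succ_of_le hjN)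
    (by positivity) hd hS
  have hφt : |φ (p j) - φ t| < δ / 4 := by
    have := hφr _ (hp_mem j (by omega)) _ ht (by
      rw [Real.dist_eq, abs_sub_comm, abs_of_nonneg (by linarith [hjt.1])]
      linarith [hp_succ j, hjt.2])
    rwa [Real.dist_eq] at this
  have hδ2 : δ / 4 * ((N + 1 : ℕ) * (1 / (N + 1)) + 1) = δ / 2 := by
    push_cast
    field_simp
    ring
  have hpA : p 0 = A := by simp [p]
  rw [hsum, ← hpA]
  calc _ ≤ |φ (p 0) + ∑ i ∈ range (N + 1), d i * S i - φ (p j)| + |φ (p j) - φ t| :=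
        abs_sub_le _ _ _
    _ < δ := by linarith

end IsSquashing

def NetApproxOn (σ : ℝ → ℝ) (n k : ℕ) (K : Set (Fin n → ℝ)) (f : (Fin n → ℝ) → ℝ) : Prop :=
  ∀ ε > 0, ∃ G, Net σ n k G ∧ ∀ x ∈ K, |G x - f x| < ε

namespace NetApproxOn

variable {σ : ℝ → ℝ} {n k : ℕ} {K : Set (Fin n → ℝ)} {f g : (Fin n → ℝ) → ℝ}

theorem of_net (hf : Net σ n k f) : NetApproxOn σ n k K f :=
  fun _ hε => ⟨f, hf, fun x _ => by simpa using hε⟩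

theorem of_forall_near (h : ∀ ε > 0, ∃ g, NetApproxOn σ n k K g ∧ ∀ x ∈ K, |g x - f x| < ε) :
    NetApproxOn σ n k K f := by
  intro ε hε
  obtain ⟨g, hg, hgf⟩ := h (ε / 2) (half_pos hε)
  obtain ⟨G, hG, hGg⟩ := hg (ε / 2) (half_pos hε)
  refine ⟨G, hG, fun x hx => ?_⟩
  calc |G x - f x| ≤ |G x - g x| + |g x - f x| := abs_sub_le _ _ _
    _ < ε := by linarith [hGg x hx, hgf x hx]

theorem add (hf : NetApproxOn σ n (k + 2) K f) (hg : NetApproxOn σ n (k + 2) K g) :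
    NetApproxOn σ n (k + 2) K fun x => f x + g x := by
  intro ε hε
  obtain ⟨F, hF, hFf⟩ := hf (ε / 2) (half_pos hε)
  obtain ⟨G, hG, hGg⟩ := hg (ε / 2) (half_pos hε)
  refine ⟨_, hF.add hG, fun x hx => ?_⟩
  calc |F x + G x - (f x + g x)| ≤ |F x - f x| + |G x - g x| := by
        rw [add_sub_add_comm]; exact abs_add_le _ _
    _ < ε := by linarith [hFf x hx, hGg x hx]

theorem const_mul (hf : NetApproxOn σ n k K f) (c : ℝ) :
    NetApproxOn σ n k K fun x => c * f x := by
  intro ε hε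
  obtain ⟨F, hF, hFf⟩ := hf (ε / (|c| + 1)) (by positivity)
  refine ⟨_, hF.mul_add_const c 0, fun x hx => ?_⟩
  calc |c * F x + 0 - c * f x| = |c| * |F x - f x| := by rw [add_zero, ← mul_sub, abs_mul]
    _ ≤ |c| * (ε / (|c| + 1)) := by gcongr; exact (hFf x hx).le
    _ < (|c| + 1) * (ε / (|c| + 1)) := by gcongr; linarith
    _ = ε := mul_div_cancel₀ ε (by positivity)

theorem sum {ι : Type*} (s : Finset ι) {f : ι → (Fin n → ℝ) → ℝ}
    (hf : ∀ i ∈ s, NetApproxOn σ n (k + 2) K (f i)) :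
    NetApproxOn σ n (k + 2) K fun x => ∑ i ∈ s, f i x := by
  simpa only [← Finset.sum_apply] using
    Finset.sum_induction f (NetApproxOn σ n (k + 2) K) (fun _ _ => add)
      (of_net (Net.const _ 0)) hf

end NetApproxOn

section

variable {σ : ℝ → ℝ} {n k : ℕ} {K : Set (Fin n → ℝ)}

theorem Net.netApproxOn_comp (hσ : IsSquashing σ) (hK : IsCompact K) {F : (Fin n → ℝ) → ℝ}
    (hF : Net σ n k F) {φ : ℝ → ℝ} (hφ : Continuous φ) :
    NetApproxOn σ n (k + 1) K fun x => φ (F x) := by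
  intro ε hε
  obtain ⟨C, hC⟩ := hK.exists_bound_of_continuousOn (hF.continuous hσ.2.1).continuousOn
  obtain ⟨m, a₀, a, b, c, hnear⟩ := hσ.exists_sum_near hφ.continuousOn (A := -C) (B := C) hε
  refine ⟨_, Net.comb k m (fun j x => b j * F x + c j) a₀ a fun j => hF.mul_add_const _ _,
    fun x hx => hnear _ (abs_le.1 (hC x hx))⟩

theorem NetApproxOn.succ (hσ : IsSquashing σ) (hK : IsCompact K) {f : (Fin n → ℝ) → ℝ}
    (hf : NetApproxOn σ n k K f) : NetApproxOn σ n (k + 1) K f :=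
  .of_forall_near fun ε hε =>
    let ⟨G, hG, hGf⟩ := hf ε hε
    ⟨G, hG.netApproxOn_comp hσ hK continuous_id, hGf⟩

theorem NetApproxOn.exists_comp_near (hK : IsCompact K) {f : (Fin n → ℝ) → ℝ}
    (hf : NetApproxOn σ n k K f) (hfK : ContinuousOn f K) {φ : ℝ → ℝ} (hφ : Continuous φ)
    {ε : ℝ} (hε : 0 < ε) : ∃ G, Net σ n k G ∧ ∀ x ∈ K, |φ (G x) - φ (f x)| < ε := by
  obtain ⟨δ, hδ, hφδ⟩ := Metric.mem_uniformity_dist.1 <|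
    (hK.image_of_continuousOn hfK).uniformContinuousAt_of_continuousAt φ
      (fun y _ => hφ.continuousAt) (Metric.dist_mem_uniformity hε)
  obtain ⟨G, hG, hGf⟩ := hf δ hδ
  refine ⟨G, hG, fun x hx => ?_⟩
  have : dist (φ (f x)) (φ (G x)) < ε := hφδ (a := f x) (b := G x)
    (by rw [Real.dist_eq, abs_sub_comm]; exact hGf x hx) (Set.mem_image_of_mem f hx)
  rwa [Real.dist_eq, abs_sub_comm] at this

noncomputable def expRidge (K : Set (Fin n → ℝ)) (w : Fin n → ℝ) : C(K, ℝ) :=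
  ⟨fun x => Real.exp (∑ i, w i * (x : Fin n → ℝ) i), Real.continuous_exp.comp <|
    continuous_finsetSum _ fun i _ =>
      continuous_const.mul ((continuous_apply i).comp continuous_subtype_val)⟩

theorem expRidge_add (w v : Fin n → ℝ) : expRidge K (w + v) = expRidge K w * expRidge K v := by
  ext x
  simp [expRidge, add_mul, Finset.sum_add_distrib, Real.exp_add]

noncomputable def expRidgeSubalgebra (K : Set (Fin n → ℝ)) : Subalgebra ℝ C(K, ℝ) :=
  (Submodule.span ℝ (Set.range (expRidge K))).toSubalgebra
    (Submodule.subset_span ⟨0, by ext; simp [expRidge]⟩)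
    fun f g hf hg => by
      have hfg := Submodule.mul_mem_mul hf hg
      rw [Submodule.span_mul_span] at hfg
      refine Submodule.span_le.2 ?_ hfg
      rintro _ ⟨_, ⟨w, rfl⟩, _, ⟨v, rfl⟩, rfl⟩
      exact Submodule.subset_span ⟨w + v, expRidge_add w v⟩

theorem expRidgeSubalgebra_separatesPoints : (expRidgeSubalgebra K).SeparatesPoints := by
  intro x y hxy
  obtain ⟨i, hi⟩ := Function.ne_iff.1 (Subtype.coe_ne_coe.2 hxy)
  refine ⟨_, ⟨expRidge K (Pi.single i 1), Submodule.subset_span ⟨_, rfl⟩, rfl⟩, ?_⟩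
  simpa [expRidge, Pi.single_apply] using hi

theorem exists_sum_exp_near (hK : IsCompact K) {h : (Fin n → ℝ) → ℝ} (hh : ContinuousOn h K)
    {ε : ℝ} (hε : 0 < ε) : ∃ (m : ℕ) (c : Fin m → ℝ) (w : Fin m → Fin n → ℝ),
      ∀ x ∈ K, |∑ j, c j * Real.exp (∑ i, w j i * x i) - h x| < ε := by
  have : CompactSpace K := isCompact_iff_compactSpace.1 hK
  obtain ⟨⟨g, hg⟩, hgh⟩ := ContinuousMap.exists_mem_subalgebra_near_continuous_of_separatesPoints
    _ expRidgeSubalgebra_separatesPoints _ hh.domRestrict ε hε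
  obtain ⟨m, c, v, rfl⟩ := Submodule.mem_span_set'.1 hg
  choose w hw using fun j => (v j).2
  refine ⟨m, c, w, fun x hx => ?_⟩
  simpa [← hw, expRidge] using hgh ⟨x, hx⟩

theorem netApproxOn_two_of_continuousOn (hσ : IsSquashing σ) (hK : IsCompact K)
    {h : (Fin n → ℝ) → ℝ} (hh : ContinuousOn h K) : NetApproxOn σ n 2 K h := by
  refine .of_forall_near fun ε hε => ?_
  obtain ⟨m, c, w, hnear⟩ := exists_sum_exp_near hK hh hε
  refine ⟨_, NetApproxOn.sum (k := 0) Finset.univ fun j _ => NetApproxOn.const_mul ?_ (c j),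
    hnear⟩
  simpa using (Net.affine 0 (w j)).netApproxOn_comp hσ hK Real.continuous_exp

theorem StrictMono.continuousOn_invFun (hcont : Continuous σ) (hstrict : StrictMono σ) :
    ContinuousOn (Function.invFun σ) (Set.range σ) := by
  have : (Set.range σ).OrdConnected := (isPreconnected_range hcont).ordConnected
  rw [continuousOn_iff_continuous_domRestrict]
  convert (hstrict.orderIso σ).symm.continuous using 1
  funext y
  exact hstrict.injective <| (Function.invFun_eq y.2).trans
    (congrArg Subtype.val ((hstrict.orderIso σ).apply_symm_apply y)).symm

end

theorem stmt13 (σ : ℝ → ℝ) (hσ : IsSquashing σ) (hstrict : StrictMono σ)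
    (n : ℕ) (K : Set (Fin n → ℝ)) (hK : IsCompact K)
    (T : (Fin n → ℝ) → ℝ) (hT : ContinuousOn T K)
    (hTrange : ∀ x ∈ K, T x ∈ Set.range σ)
    (ε : ℝ) (hε : 0 < ε) :
    ∃ g : (Fin n → ℝ) → ℝ, Net σ n 4 g ∧ ∀ x ∈ K, |σ (g x) - T x| < ε := by
  set h : (Fin n → ℝ) → ℝ := fun x => Function.invFun σ (T x)
  have hh : ContinuousOn h K := (hstrict.continuousOn_invFun hσ.2.1).comp hT hTrange
  have hσh : ∀ x ∈ K, σ (h x) = T x := fun x hx => Function.invFun_eq (hTrange x hx)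
  have h4 : NetApproxOn σ n 4 K h :=
    ((netApproxOn_two_of_continuousOn hσ hK hh).succ hσ hK).succ hσ hK
  obtain ⟨g, hg, hgh⟩ := h4.exists_comp_near hK hh hσ.2.1 hε
  exact ⟨g, hg, fun x hx => hσh x hx ▸ hgh x hx⟩
end
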